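/- Let H be a real normed vector space, λ ≥ 0, a > 2 and Z ∈ H. The SCAD functional thresholding rule minimizes the penalized quadratic loss with SCAD penalty: for every θ ∈ H, (1/2)‖s^SC_λ(Z) − Z‖² + p_λ(‖s^SC_λ(Z)‖) ≤ (1/2)‖θ − Z‖² + p_λ(‖θ‖), where p_λ(t) = λt for 0 ≤ t ≤ λ, p_λ(t) = (2aλt − t² − λ²)/(2(a−1)) for λ < t ≤ aλ, and p_λ(t) = λ²(a+1)/2 for t > aλ. -/

import Mathlib

/-!
The thresholding rule acts radially: `s(Z)` is a multiple `c • Z` with `0 ≤ c ≤ 1`, so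
`‖s(Z) - Z‖ = ‖Z‖ - ‖s(Z)‖`, while `|‖θ‖ - ‖Z‖| ≤ ‖θ - Z‖` for every `θ`. This reduces the claim
to the scalar problem of minimizing `½ (t - z)² + p(t)` over `t ≥ 0`, with `z = ‖Z‖`.

For the scalar problem, write `q` for the middle branch of the penalty, extended to all of `ℝ`.
It is the concave parabola `λ²(a+1)/2 - (t - aλ)²/(2(a-1))`, which touches `λt` at `t = λ` and the
constant `λ²(a+1)/2` at `t = aλ`, so `q ≤ p` everywhere. Hence `½ (t - z)² + p(t)` dominates the
quadratic `½ (t - z)² + q(t)`, whose leading coefficient is `(a-2)/(2(a-1)) > 0` and whose minimizer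
`((a-1)z - aλ)/(a-2)` is the middle branch of the rule. The outer branches are handled by the
soft-thresholding minimization and by comparing with the constant `λ²(a+1)/2`.
-/

/-- SCAD functional thresholding rule: soft thresholding for `‖Z‖ ≤ 2λ`,
`(((a−1) − aλ/‖Z‖)/(a−2)) • Z` for `2λ < ‖Z‖ ≤ aλ`, and `Z` for `‖Z‖ > aλ`. -/
noncomputable def scadThresh {H : Type*} [NormedAddCommGroup H] [NormedSpace ℝ H]
    (lam a : ℝ) (Z : H) : H :=
  if ‖Z‖ ≤ 2 * lam then (max (1 - lam / ‖Z‖) 0) • Z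
  else if ‖Z‖ ≤ a * lam then (((a - 1) - a * lam / ‖Z‖) / (a - 2)) • Z
  else Z

/-- SCAD penalty: `p_λ(t) = λt` for `t ≤ λ`, `(2aλt − t² − λ²)/(2(a−1))` for `λ < t ≤ aλ`,
and `λ²(a+1)/2` for `t > aλ`. -/
noncomputable def scadPenalty (lam a t : ℝ) : ℝ :=
  if t ≤ lam then lam * t
  else if t ≤ a * lam then (2 * a * lam * t - t ^ 2 - lam ^ 2) / (2 * (a - 1))
  else lam ^ 2 * (a + 1) / 2

lemma norm_div_norm_smul {H : Type*} [NormedAddCommGroup H] [NormedSpace ℝ H] {Z : H} {r : ℝ}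
    (hr : 0 ≤ r) (hrZ : r ≤ ‖Z‖) : ‖(r / ‖Z‖) • Z‖ = r := by
  rw [norm_smul, Real.norm_of_nonneg (by positivity)]
  exact div_mul_cancel_of_imp fun h ↦ le_antisymm (h ▸ hrZ) hr

lemma norm_div_norm_smul_sub_self {H : Type*} [NormedAddCommGroup H] [NormedSpace ℝ H] {Z : H}
    {r : ℝ} (hr : 0 ≤ r) (hrZ : r ≤ ‖Z‖) : ‖(r / ‖Z‖) • Z - Z‖ = ‖Z‖ - r := by
  rcases eq_or_ne Z 0 with rfl | hZ
  · simp only [norm_zero] at hrZ ⊢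
    simp [le_antisymm hrZ hr]
  have h := norm_div_norm_smul (Z := Z) (sub_nonneg.mpr hrZ) (sub_le_self _ hr)
  rwa [sub_div, div_self (norm_ne_zero_iff.mpr hZ), sub_smul, one_smul, ← norm_neg, neg_sub] at h

noncomputable def scadQuad (lam a t : ℝ) : ℝ :=
  lam ^ 2 * (a + 1) / 2 - (t - a * lam) ^ 2 / (2 * (a - 1))

noncomputable def scadShrink (lam a z : ℝ) : ℝ :=
  if z ≤ 2 * lam then max (z - lam) 0
  else if z ≤ a * lam then ((a - 1) * z - a * lam) / (a - 2)
  else z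

noncomputable def scadLoss (lam a z t : ℝ) : ℝ :=
  (1 / 2) * (t - z) ^ 2 + scadPenalty lam a t

section

variable {lam a z t : ℝ}

lemma mul_sub_scadQuad (ha : a ≠ 1) :
    lam * t - scadQuad lam a t = (t - lam) ^ 2 / (2 * (a - 1)) := by
  have : a - 1 ≠ 0 := sub_ne_zero.mpr ha
  unfold scadQuad
  field_simp
  ring

lemma scadQuad_eq (ha : a ≠ 1) :
    scadQuad lam a t = (2 * a * lam * t - t ^ 2 - lam ^ 2) / (2 * (a - 1)) := by
  have : a - 1 ≠ 0 := sub_ne_zero.mpr ha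
  unfold scadQuad
  field_simp
  ring

lemma scadPenalty_of_le (ht : t ≤ lam) : scadPenalty lam a t = lam * t :=
  if_pos ht

lemma scadPenalty_of_lt_of_le (ha : a ≠ 1) (h₁ : lam < t) (h₂ : t ≤ a * lam) :
    scadPenalty lam a t = scadQuad lam a t := by
  rw [scadPenalty, if_neg h₁.not_ge, if_pos h₂, scadQuad_eq ha]

lemma scadPenalty_of_lt (hlam : 0 ≤ lam) (ha : 1 ≤ a) (ht : a * lam < t) :
    scadPenalty lam a t = lam ^ 2 * (a + 1) / 2 := by
  have : lam ≤ a * lam := le_mul_of_one_le_left hlam ha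
  rw [scadPenalty, if_neg (by linarith), if_neg ht.not_ge]

lemma scadQuad_le_scadPenalty (ha : 1 < a) (t : ℝ) : scadQuad lam a t ≤ scadPenalty lam a t := by
  have ha' : 0 < 2 * (a - 1) := by linarith
  unfold scadPenalty
  split_ifs with h₁ h₂
  · have := mul_sub_scadQuad (lam := lam) (t := t) ha.ne'
    have : 0 ≤ (t - lam) ^ 2 / (2 * (a - 1)) := by positivity
    linarith
  · exact (scadQuad_eq ha.ne').le
  · unfold scadQuad
    have : 0 ≤ (t - a * lam) ^ 2 / (2 * (a - 1)) := by positivity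
    linarith

lemma half_sq_add_scadQuad_eq (ha₁ : a ≠ 1) (ha₂ : a ≠ 2) (z t : ℝ) :
    (1 / 2) * (t - z) ^ 2 + scadQuad lam a t =
      (1 / 2) * (((a - 1) * z - a * lam) / (a - 2) - z) ^ 2
        + scadQuad lam a (((a - 1) * z - a * lam) / (a - 2))
        + (a - 2) / (2 * (a - 1)) * (t - ((a - 1) * z - a * lam) / (a - 2)) ^ 2 := by
  have : a - 1 ≠ 0 := sub_ne_zero.mpr ha₁
  have : a - 2 ≠ 0 := sub_ne_zero.mpr ha₂
  unfold scadQuad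
  field_simp
  ring

lemma half_sq_max_sub_add_mul_le (ht : 0 ≤ t) :
    (1 / 2) * (max (z - lam) 0 - z) ^ 2 + lam * max (z - lam) 0 ≤
      (1 / 2) * (t - z) ^ 2 + lam * t := by
  rcases le_total z lam with hz | hz
  · rw [max_eq_right (by linarith)]
    nlinarith [mul_nonneg ht (by linarith : 0 ≤ t / 2 + lam - z)]
  · rw [max_eq_left (by linarith)]
    nlinarith [sq_nonneg (t - z + lam)]

lemma scadLoss_scadShrink_le_of_le_two_mul (hlam : 0 ≤ lam) (ha : 2 < a) (hz : z ≤ 2 * lam)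
    (ht : 0 ≤ t) : scadLoss lam a z (scadShrink lam a z) ≤ scadLoss lam a z t := by
  have hu : max (z - lam) 0 ≤ lam := max_le (by linarith) hlam
  rw [scadLoss, scadLoss, scadShrink, if_pos hz, scadPenalty_of_le hu]
  rcases le_or_gt t lam with htl | htl
  · rw [scadPenalty_of_le htl]
    exact half_sq_max_sub_add_mul_le ht
  · -- beyond `λ` the quadratic minorant increases, since its minimizer lies below `λ`
    have hm : ((a - 1) * z - a * lam) / (a - 2) ≤ lam := by
      rw [div_le_iff₀ (by linarith)]
      nlinarith
    have hquad := half_sq_add_scadQuad_eq (lam := lam) (by linarith : a ≠ 1) (by linarith) z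
    have hmono : (1 / 2) * (lam - z) ^ 2 + scadQuad lam a lam ≤
        (1 / 2) * (t - z) ^ 2 + scadQuad lam a t := by
      rw [hquad t, hquad lam]
      gcongr
      exact div_nonneg (by linarith) (by linarith)
    have hq : lam * lam - scadQuad lam a lam = 0 := by
      rw [mul_sub_scadQuad (by linarith), sub_self, zero_pow two_ne_zero, zero_div]
    linarith [half_sq_max_sub_add_mul_le (lam := lam) (z := z) hlam,
      scadQuad_le_scadPenalty (lam := lam) (by linarith : 1 < a) t]

lemma scadLoss_scadShrink_le_of_lt_of_le (ha : 2 < a) (h₁ : 2 * lam < z) (h₂ : z ≤ a * lam)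
    (t : ℝ) : scadLoss lam a z (scadShrink lam a z) ≤ scadLoss lam a z t := by
  have ha₂ : 0 < a - 2 := by linarith
  rw [scadShrink, if_neg h₁.not_ge, if_pos h₂]
  set m := ((a - 1) * z - a * lam) / (a - 2)
  have hm₁ : lam < m := by
    rw [lt_div_iff₀ ha₂]
    nlinarith
  have hm₂ : m ≤ a * lam := by
    rw [div_le_iff₀ ha₂]
    nlinarith
  have hquad := half_sq_add_scadQuad_eq (lam := lam) (by linarith : a ≠ 1) (by linarith) z t
  have : 0 ≤ (a - 2) / (2 * (a - 1)) * (t - m) ^ 2 := by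
    have : 0 < 2 * (a - 1) := by linarith
    positivity
  rw [scadLoss, scadLoss, scadPenalty_of_lt_of_le (by linarith) hm₁ hm₂]
  linarith [scadQuad_le_scadPenalty (lam := lam) (by linarith : 1 < a) t]

lemma scadLoss_scadShrink_le_of_lt (hlam : 0 ≤ lam) (ha : 2 < a) (hz : a * lam < z) (t : ℝ) :
    scadLoss lam a z (scadShrink lam a z) ≤ scadLoss lam a z t := by
  have h2a : 2 * lam ≤ a * lam := by nlinarith
  rw [scadShrink, if_neg (by linarith), if_neg hz.not_ge, scadLoss, scadLoss,
    scadPenalty_of_lt hlam (by linarith) hz, sub_self]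
  rcases le_or_gt t (a * lam) with ht | ht
  · have hle := scadQuad_le_scadPenalty (lam := lam) (by linarith : 1 < a) t
    have hsq : (t - a * lam) ^ 2 ≤ (t - z) ^ 2 := by nlinarith
    have : (t - a * lam) ^ 2 / (2 * (a - 1)) ≤ (1 / 2) * (t - z) ^ 2 := by
      rw [div_le_iff₀ (by linarith)]
      nlinarith [sq_nonneg (t - a * lam)]
    unfold scadQuad at hle
    linarith
  · rw [scadPenalty_of_lt hlam (by linarith) ht]
    nlinarith [sq_nonneg (t - z)]

theorem scadLoss_scadShrink_le (hlam : 0 ≤ lam) (ha : 2 < a) (ht : 0 ≤ t) :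
    scadLoss lam a z (scadShrink lam a z) ≤ scadLoss lam a z t := by
  rcases le_or_gt z (2 * lam) with h₁ | h₁
  · exact scadLoss_scadShrink_le_of_le_two_mul hlam ha h₁ ht
  rcases le_or_gt z (a * lam) with h₂ | h₂
  · exact scadLoss_scadShrink_le_of_lt_of_le ha h₁ h₂ t
  · exact scadLoss_scadShrink_le_of_lt hlam ha h₂ t

lemma scadShrink_nonneg (ha : 2 < a) {z : ℝ} (hz : 0 ≤ z) :
    0 ≤ scadShrink lam a z := by
  unfold scadShrink
  split_ifs with h₁ h₂
  · exact le_max_right _ _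
  · exact div_nonneg (by nlinarith) (by linarith)
  · exact hz

lemma scadShrink_le_self (hlam : 0 ≤ lam) (ha : 2 < a) {z : ℝ} (hz : 0 ≤ z) :
    scadShrink lam a z ≤ z := by
  unfold scadShrink
  split_ifs with h₁ h₂
  · exact max_le (by linarith) hz
  · rw [div_le_iff₀ (by linarith)]
    nlinarith
  · exact le_rfl

lemma scadThresh_eq_smul {H : Type*} [NormedAddCommGroup H] [NormedSpace ℝ H] (Z : H) :
    scadThresh lam a Z = (scadShrink lam a ‖Z‖ / ‖Z‖) • Z := by
  rcases eq_or_ne Z 0 with rfl | hZ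
  · simp [scadThresh]
  have hZ' : ‖Z‖ ≠ 0 := norm_ne_zero_iff.mpr hZ
  unfold scadThresh scadShrink
  split_ifs
  · rw [← max_div_div_right (norm_nonneg Z), sub_div, div_self hZ', zero_div]
  · congr 1
    field_simp
  · rw [div_self hZ', one_smul]

end

/-- The SCAD functional thresholding rule minimizes the penalized quadratic loss
with SCAD penalty. -/
theorem scadThresh_min_penalized_loss {H : Type*} [NormedAddCommGroup H] [NormedSpace ℝ H]
    (lam a : ℝ) (hlam : 0 ≤ lam) (ha : 2 < a) (Z : H) :
    ∀ θ : H,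
      (1 / 2) * ‖scadThresh lam a Z - Z‖ ^ 2 + scadPenalty lam a ‖scadThresh lam a Z‖ ≤
        (1 / 2) * ‖θ - Z‖ ^ 2 + scadPenalty lam a ‖θ‖ := by
  intro θ
  have h₀ := scadShrink_nonneg (lam := lam) (a := a) ha (norm_nonneg Z)
  have h₁ := scadShrink_le_self hlam ha (norm_nonneg Z)
  rw [scadThresh_eq_smul, norm_div_norm_smul h₀ h₁, norm_div_norm_smul_sub_self h₀ h₁,
    sub_sq_comm]
  calc scadLoss lam a ‖Z‖ (scadShrink lam a ‖Z‖)
      ≤ scadLoss lam a ‖Z‖ ‖θ‖ := scadLoss_scadShrink_le hlam ha (norm_nonneg θ)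
    _ ≤ (1 / 2) * ‖θ - Z‖ ^ 2 + scadPenalty lam a ‖θ‖ := by
      have := sq_le_sq.mpr ((abs_norm_sub_norm_le θ Z).trans (le_abs_self ‖θ - Z‖))
      rw [scadLoss]
      linarith
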